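/- For every M ∈ SL(2,ℝ), the phase factor satisfies ω(M, M⁻¹) = ρ(M), where ρ(M) = 1 if the bottom-left entry of M is 0 and the bottom-right entry is negative, and ρ(M) = 0 otherwise. -/

import Mathlib

/-- The automorphy factor `j(M, z) = c z + d` for `M = (a, b; c, d)`. -/
noncomputable def jfac (M : Matrix (Fin 2) (Fin 2) ℝ) (z : ℂ) : ℂ :=
  (M 1 0 : ℂ) * z + (M 1 1 : ℂ)

/-- The Möbius action of `M = (a, b; c, d)` on `z`: `(a z + b) / (c z + d)`. -/
noncomputable def moebius (M : Matrix (Fin 2) (Fin 2) ℝ) (z : ℂ) : ℂ :=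
  ((M 0 0 : ℂ) * z + (M 0 1 : ℂ)) / ((M 1 0 : ℂ) * z + (M 1 1 : ℂ))

/-- The phase factor
`ω(M,N) = (−log j(MN,z) + log j(M, Nz) + log j(N,z)) / (2πi)`,
using the principal branch of the complex logarithm. -/
noncomputable def phaseFactor (M N : Matrix (Fin 2) (Fin 2) ℝ) (z : ℂ) : ℂ :=
  (-Complex.log (jfac (M * N) z) + Complex.log (jfac M (moebius N z))
    + Complex.log (jfac N z)) / (2 * Real.pi * Complex.I)

/-- `ρ(M) = 1` if `c_M = 0` and `d_M < 0`, and `ρ(M) = 0` otherwise. -/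
noncomputable def rho (M : Matrix (Fin 2) (Fin 2) ℝ) : ℝ :=
  if M 1 0 = 0 ∧ M 1 1 < 0 then 1 else 0

/-- `ω(M, M⁻¹) = ρ(M)` for every `M ∈ SL(2,ℝ)`. -/
theorem phaseFactor_self_inv (M : Matrix (Fin 2) (Fin 2) ℝ) (hM : M.det = 1)
    (z : ℂ) (hz : 0 < z.im) :
    phaseFactor M M⁻¹ z = (rho M : ℂ) := by
  have hdet : M 0 0 * M 1 1 - M 0 1 * M 1 0 = 1 := by rw [← Matrix.det_fin_two]; exact hM
  set a := M 0 0 with ha; set b := M 0 1 with hb; set c := M 1 0 with hc; set d := M 1 1 with hd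
  have hinv : M⁻¹ = M.adjugate := by
    rw [Matrix.inv_def, hM]; simp
  have h00 : M⁻¹ 0 0 = d := by rw [hinv, Matrix.adjugate_fin_two]; simp [hd]
  have h01 : M⁻¹ 0 1 = -b := by rw [hinv, Matrix.adjugate_fin_two]; simp [hb]
  have h10 : M⁻¹ 1 0 = -c := by rw [hinv, Matrix.adjugate_fin_two]; simp [hc]
  have h11 : M⁻¹ 1 1 = a := by rw [hinv, Matrix.adjugate_fin_two]; simp [ha]
  have hMM : M * M⁻¹ = 1 := Matrix.mul_nonsing_inv M (by rw [hM]; exact isUnit_one)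
  -- w := j(M⁻¹, z)
  set w : ℂ := (-c : ℂ) * z + (a : ℂ) with hw
  have hjinv : jfac M⁻¹ z = w := by simp [jfac, h10, h11, hw]
  have hwim : w.im = -c * z.im := by simp [hw]
  have hwre : w.re = -c * z.re + a := by simp [hw]
  have hw0 : w ≠ 0 := by
    rcases eq_or_ne c 0 with h | h
    · have hne : a ≠ 0 := by
        intro h0; rw [h0, h] at hdet; norm_num at hdet
      intro h0
      apply hne
      have := congrArg Complex.re h0
      rw [hwre, h] at this; simpa using this
    · intro h0
      have := congrArg Complex.im h0
      rw [hwim] at this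
      simp only [Complex.zero_im] at this
      rcases mul_eq_zero.mp this with h' | h'
      · exact h (by linarith [neg_eq_zero.mp h'])
      · exact hz.ne' h'
  have h1 : jfac (M * M⁻¹) z = 1 := by
    rw [hMM]; simp [jfac, Matrix.one_apply]
  have hdetC : (a : ℂ) * d - b * c = 1 := by exact_mod_cast hdet
  have h2 : jfac M (moebius M⁻¹ z) = w⁻¹ := by
    simp only [jfac, moebius, h00, h01, h10, h11]
    push_cast
    simp only [← hc, ← hd]
    rw [← hw]
    field_simp
    linear_combination hdetC
  rw [phaseFactor, h1, h2, hjinv, Complex.log_one, neg_zero, zero_add]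
  have hπ : (2 * (Real.pi : ℂ) * Complex.I) ≠ 0 := by
    simp [Real.pi_ne_zero, Complex.I_ne_zero]
  rcases eq_or_ne c 0 with hc0 | hc0
  · -- c = 0 : w = a, and a * d = 1
    have had : a * d = 1 := by rw [hc0] at hdet; linarith
    have hd0 : d ≠ 0 := by intro h0; rw [h0, mul_zero] at had; norm_num at had
    have hwa : w = (a : ℂ) := by rw [hw, hc0]; push_cast; ring
    rcases lt_or_gt_of_ne hd0 with hdneg | hdpos
    · -- d < 0, so a < 0 : the sum of logs is 2πi
      have haneg : a < 0 := by nlinarith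
      have harg : w.arg = Real.pi := by
        rw [hwa]; exact Complex.arg_ofReal_of_neg haneg
      have hlogsum : Complex.log w⁻¹ + Complex.log w = 2 * Real.pi * Complex.I := by
        apply Complex.ext
        · simp only [Complex.add_re, Complex.log_re, map_inv₀, Real.log_inv]
          simp [Complex.mul_re, Complex.I_re, Complex.I_im]
        · simp only [Complex.add_im, Complex.log_im, Complex.arg_inv, harg, if_pos rfl]
          simp [Complex.mul_im, Complex.I_re, Complex.I_im]; ring
      rw [hlogsum, div_self hπ, rho, if_pos ⟨hc0, hdneg⟩]; norm_num
    · -- d > 0, so a > 0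
      have hapos : 0 < a := by nlinarith
      have harg : w.arg ≠ Real.pi := by
        rw [Ne, Complex.arg_eq_pi_iff]
        rintro ⟨hre, -⟩
        rw [hwa] at hre; simp at hre; linarith
      rw [Complex.log_inv w harg, neg_add_cancel, zero_div, rho,
        if_neg (by rintro ⟨-, h⟩; linarith)]
      norm_num
  · -- c ≠ 0 : w has nonzero imaginary part
    have harg : w.arg ≠ Real.pi := by
      rw [Ne, Complex.arg_eq_pi_iff]
      rintro ⟨-, him⟩
      rw [hwim] at him
      rcases mul_eq_zero.mp him with h' | h'
      · exact hc0 (by linarith [neg_eq_zero.mp h'])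
      · exact hz.ne' h'
    rw [Complex.log_inv w harg, neg_add_cancel, zero_div, rho,
      if_neg (by rintro ⟨h, -⟩; exact hc0 h)]
    norm_num
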